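/- Let N ≥ 2, M > 0, fix an index i, let r > 0, and suppose that (a) f maps the closed ball B of radius r centered at x_i into itself, and (b) L := 2 β N M² (N − 1) · exp(−β (Δ_i − 2 r M)) < 1. Then f has a unique fixed point x_i* in B, and for every ξ ∈ B the iterates of the update rule converge to it geometrically: ‖f^{(n)}(ξ) − x_i*‖ ≤ L^n ‖ξ − x_i*‖ for all n ∈ ℕ, where f^{(n)} denotes the n-fold iterate of f. -/

import Mathlib

open scoped BigOperators RealInnerProductSpace

/-- softmax(v)_j = exp(v_j) / Σ_k exp(v_k). -/
noncomputable def softmax {N : ℕ} (v : Fin N → ℝ) : Fin N → ℝ :=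
  fun j => Real.exp (v j) / ∑ k, Real.exp (v k)

/-- The Hopfield update rule f(ξ) = X softmax(β Xᵀ ξ) = Σ_i softmax(β ⟪x_i, ξ⟫)_i • x_i. -/
noncomputable def hopfieldUpdate {d N : ℕ} (x : Fin N → EuclideanSpace ℝ (Fin d))
    (β : ℝ) (ξ : EuclideanSpace ℝ (Fin d)) : EuclideanSpace ℝ (Fin d) :=
  ∑ i, softmax (fun j => β * ⟪x j, ξ⟫) i • x i

/-!
On the closed ball `B` of radius `r` around `x i`, every softmax weight `p_j` with `j ≠ i` is at
most `ε = exp (-β (Δ_i - 2 r M))`. Moving `ξ` to `η` shifts every logit `β ⟪x_k, ξ⟫` by at most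
`s = β M ‖ξ - η‖`, which changes each weight by a factor within `exp (± 2 s)`, hence `p_j` by at
most `2 s ε`. Since the weights sum to one, `f ξ - f η = ∑_{j ≠ i} (p_j(ξ) - p_j(η)) (x_j - x_i)`,
so `f` is `4 β M² (N - 1) ε`-Lipschitz on `B`, and this constant is at most `L`. Banach's
fixed-point theorem on the complete set `B` finishes the proof.
-/

open scoped NNReal
open Set Metric Function Finset

section Softmax

variable {N : ℕ} [Nonempty (Fin N)]

lemma sum_exp_pos (v : Fin N → ℝ) : 0 < ∑ k, Real.exp (v k) :=
  Finset.sum_pos (fun _ _ => Real.exp_pos _) Finset.univ_nonempty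

lemma softmax_pos (v : Fin N → ℝ) (j : Fin N) : 0 < softmax v j :=
  div_pos (Real.exp_pos _) (sum_exp_pos v)

lemma sum_softmax (v : Fin N → ℝ) : ∑ j, softmax v j = 1 := by
  simp only [softmax]
  rw [← Finset.sum_div, div_self (sum_exp_pos v).ne']

omit [Nonempty (Fin N)] in
lemma softmax_le_exp_sub (v : Fin N → ℝ) (i j : Fin N) :
    softmax v j ≤ Real.exp (v j - v i) := by
  have : Nonempty (Fin N) := ⟨i⟩
  rw [Real.exp_sub]
  unfold softmax
  gcongr
  exact Finset.single_le_sum (fun k _ => (Real.exp_pos (v k)).le) (Finset.mem_univ i)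

lemma exp_neg_two_mul_mul_softmax_le {v w : Fin N → ℝ} {s : ℝ}
    (hs : ∀ k, |v k - w k| ≤ s) (j : Fin N) :
    Real.exp (-(2 * s)) * softmax v j ≤ softmax w j := by
  have hsum : ∑ k, Real.exp (w k) ≤ Real.exp s * ∑ k, Real.exp (v k) := by
    rw [Finset.mul_sum]
    refine Finset.sum_le_sum fun k _ => ?_
    rw [← Real.exp_add]
    exact Real.exp_le_exp.2 (by linarith [(abs_le.1 (hs k)).1])
  calc Real.exp (-(2 * s)) * softmax v j
      = Real.exp (v j - s) / (Real.exp s * ∑ k, Real.exp (v k)) := by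
        rw [softmax, Real.exp_sub, Real.exp_neg, two_mul, Real.exp_add]
        field_simp
    _ ≤ Real.exp (w j) / ∑ k, Real.exp (w k) := by
        gcongr
        linarith [(abs_le.1 (hs j)).2]

lemma abs_softmax_sub_le {v w : Fin N → ℝ} {s : ℝ} (hs : ∀ k, |v k - w k| ≤ s) (j : Fin N) :
    |softmax v j - softmax w j| ≤ 2 * s * max (softmax v j) (softmax w j) := by
  have hs0 : 0 ≤ s := (abs_nonneg _).trans (hs j)
  have hvw := exp_neg_two_mul_mul_softmax_le hs j
  have hwv := exp_neg_two_mul_mul_softmax_le (fun k => abs_sub_comm (v k) (w k) ▸ hs k) j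
  have hexp : 1 - 2 * s ≤ Real.exp (-(2 * s)) := by linarith [Real.add_one_le_exp (-(2 * s))]
  have := softmax_pos v j
  have := softmax_pos w j
  rw [abs_sub_le_iff]
  constructor <;> nlinarith [le_max_left (softmax v j) (softmax w j),
    le_max_right (softmax v j) (softmax w j)]

end Softmax

lemma le_inner_sub_inner_of_mem_closedBall {E : Type*} [NormedAddCommGroup E]
    [InnerProductSpace ℝ E] {a b ξ : E} {M r : ℝ} (ha : ‖a‖ ≤ M) (hb : ‖b‖ ≤ M)
    (hξ : ξ ∈ closedBall a r) :
    ⟪a, a⟫ - ⟪a, b⟫ - 2 * r * M ≤ ⟪a, ξ⟫ - ⟪b, ξ⟫ := by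
  have hab : ‖a - b‖ ≤ 2 * M := by linarith [norm_sub_le a b]
  have hcross : |⟪a - b, ξ - a⟫| ≤ 2 * M * r :=
    (abs_real_inner_le_norm _ _).trans <|
      mul_le_mul hab (mem_closedBall_iff_norm.1 hξ) (norm_nonneg _) (by linarith [norm_nonneg a])
  have hsplit : ⟪a, ξ⟫ - ⟪b, ξ⟫ = ⟪a, a⟫ - ⟪a, b⟫ + ⟪a - b, ξ - a⟫ := by
    simp only [inner_sub_left, inner_sub_right, real_inner_comm b a]
    ring
  linarith [(abs_le.1 hcross).1]

theorem LipschitzOnWith.exists_unique_fixedPoint_dist_iterate_le {α : Type*} [MetricSpace α]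
    {f : α → α} {s : Set α} {K : ℝ≥0} (hf : LipschitzOnWith K f s) (hK : K < 1)
    (hsc : IsComplete s) (hs : s.Nonempty) (hsf : MapsTo f s s) :
    ∃ y ∈ s, IsFixedPt f y ∧ (∀ z ∈ s, IsFixedPt f z → z = y) ∧
      ∀ x ∈ s, ∀ n : ℕ, dist (f^[n] x) y ≤ K ^ n * dist x y := by
  have := hsc.completeSpace_coe
  have := hs.to_subtype
  have hg : ContractingWith K (hsf.restrict f s s) := ⟨hK, hf.mapsToRestrict hsf⟩
  have hfix := ContractingWith.fixedPoint_isFixedPt (f := hsf.restrict f s s) (hf := hg)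
  refine ⟨_, Subtype.prop _, congrArg Subtype.val hfix, fun z hz hfz => ?_, fun x hx n => ?_⟩
  · exact congrArg Subtype.val (hg.fixedPoint_unique (x := ⟨z, hz⟩) (Subtype.ext hfz))
  · have := (hg.2.iterate n).dist_le_mul ⟨x, hx⟩ (ContractingWith.fixedPoint _ hg)
    rwa [iterate_fixed hfix, Subtype.dist_eq, hsf.coe_iterate_restrict, NNReal.coe_pow] at this

section Hopfield

variable {d N : ℕ} {x : Fin N → EuclideanSpace ℝ (Fin d)} {β M Δ r : ℝ} {i : Fin N}

lemma softmax_le_exp_of_mem_closedBall (hβ : 0 ≤ β) (hM : ∀ k, ‖x k‖ ≤ M) {j : Fin N}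
    (hΔ : Δ ≤ ⟪x i, x i⟫ - ⟪x i, x j⟫) {ξ : EuclideanSpace ℝ (Fin d)}
    (hξ : ξ ∈ closedBall (x i) r) :
    softmax (fun k => β * ⟪x k, ξ⟫) j ≤ Real.exp (-β * (Δ - 2 * r * M)) := by
  have hgap := le_inner_sub_inner_of_mem_closedBall (hM i) (hM j) hξ
  refine (softmax_le_exp_sub _ i j).trans (Real.exp_le_exp.2 ?_)
  nlinarith

lemma hopfieldUpdate_sub_hopfieldUpdate (x : Fin N → EuclideanSpace ℝ (Fin d)) (β : ℝ)
    (i : Fin N) (ξ η : EuclideanSpace ℝ (Fin d)) :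
    hopfieldUpdate x β ξ - hopfieldUpdate x β η =
      ∑ j, (softmax (fun k => β * ⟪x k, ξ⟫) j - softmax (fun k => β * ⟪x k, η⟫) j) •
        (x j - x i) := by
  have : Nonempty (Fin N) := ⟨i⟩
  simp only [hopfieldUpdate, smul_sub, Finset.sum_sub_distrib, sub_smul, ← Finset.sum_smul,
    sum_softmax, sub_self, sub_zero]

lemma dist_hopfieldUpdate_le (hβ : 0 ≤ β) (hM : ∀ k, ‖x k‖ ≤ M)
    (hΔ : ∀ j ≠ i, Δ ≤ ⟪x i, x i⟫ - ⟪x i, x j⟫) {ξ η : EuclideanSpace ℝ (Fin d)}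
    (hξ : ξ ∈ closedBall (x i) r) (hη : η ∈ closedBall (x i) r) :
    dist (hopfieldUpdate x β ξ) (hopfieldUpdate x β η) ≤
      4 * β * M ^ 2 * ((N : ℝ) - 1) * Real.exp (-β * (Δ - 2 * r * M)) * dist ξ η := by
  have : Nonempty (Fin N) := ⟨i⟩
  set ε := Real.exp (-β * (Δ - 2 * r * M))
  set p := fun ζ : EuclideanSpace ℝ (Fin d) => softmax (fun k => β * ⟪x k, ζ⟫)
  have hM0 : 0 ≤ M := (norm_nonneg _).trans (hM i)
  have hlogit : ∀ k, |β * ⟪x k, ξ⟫ - β * ⟪x k, η⟫| ≤ β * M * dist ξ η := fun k => by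
    rw [← mul_sub, ← inner_sub_right, abs_mul, abs_of_nonneg hβ, mul_assoc, dist_eq_norm]
    exact mul_le_mul_of_nonneg_left
      ((abs_real_inner_le_norm _ _).trans (by gcongr; exact hM k)) hβ
  have hterm : ∀ j ∈ univ.erase i,
      ‖(p ξ j - p η j) • (x j - x i)‖ ≤ 4 * β * M ^ 2 * ε * dist ξ η := fun j hj => by
    have hweight : |p ξ j - p η j| ≤ 2 * (β * M * dist ξ η) * ε :=
      (abs_softmax_sub_le hlogit j).trans <| by
        gcongr
        exact max_le (softmax_le_exp_of_mem_closedBall hβ hM (hΔ j (ne_of_mem_erase hj)) hξ)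
          (softmax_le_exp_of_mem_closedBall hβ hM (hΔ j (ne_of_mem_erase hj)) hη)
    have hdiff : ‖x j - x i‖ ≤ 2 * M := by linarith [norm_sub_le (x j) (x i), hM i, hM j]
    rw [norm_smul, Real.norm_eq_abs]
    calc |p ξ j - p η j| * ‖x j - x i‖ ≤ 2 * (β * M * dist ξ η) * ε * (2 * M) := by
          gcongr
      _ = 4 * β * M ^ 2 * ε * dist ξ η := by ring
  calc dist (hopfieldUpdate x β ξ) (hopfieldUpdate x β η)
      = ‖∑ j ∈ univ.erase i, (p ξ j - p η j) • (x j - x i)‖ := by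
        rw [dist_eq_norm, hopfieldUpdate_sub_hopfieldUpdate x β i,
          ← Finset.add_sum_erase _ _ (mem_univ i), sub_self, smul_zero, zero_add]
    _ ≤ ∑ j ∈ univ.erase i, ‖(p ξ j - p η j) • (x j - x i)‖ := norm_sum_le _ _
    _ ≤ ∑ _j ∈ univ.erase i, 4 * β * M ^ 2 * ε * dist ξ η := Finset.sum_le_sum hterm
    _ = 4 * β * M ^ 2 * ((N : ℝ) - 1) * ε * dist ξ η := by
        rw [Finset.sum_const, card_erase_of_mem (mem_univ i), card_univ, Fintype.card_fin,
          nsmul_eq_mul, Nat.cast_pred (Fin.pos i)]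
        ring

end Hopfield

theorem contraction_unique_fixedPoint_geometric_general
    {d N : ℕ} (hN : 2 ≤ N) (x : Fin N → EuclideanSpace ℝ (Fin d)) (β M Δ : ℝ)
    (hβ : 0 < β)
    (hM : IsGreatest (Set.range fun i => ‖x i‖) M)
    (i : Fin N)
    (hΔ : IsLeast {v : ℝ | ∃ j, j ≠ i ∧ v = ⟪x i, x i⟫ - ⟪x i, x j⟫} Δ)
    (r : ℝ) (hr : 0 < r)
    (hmaps : Set.MapsTo (hopfieldUpdate x β)
      (Metric.closedBall (x i) r) (Metric.closedBall (x i) r))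
    (hL : 2 * β * N * M ^ 2 * ((N : ℝ) - 1) * Real.exp (-β * (Δ - 2 * r * M)) < 1) :
    ∃ xstar ∈ Metric.closedBall (x i) r,
      hopfieldUpdate x β xstar = xstar ∧
      (∀ y ∈ Metric.closedBall (x i) r, hopfieldUpdate x β y = y → y = xstar) ∧
      ∀ ξ ∈ Metric.closedBall (x i) r, ∀ n : ℕ,
        ‖(hopfieldUpdate x β)^[n] ξ - xstar‖
          ≤ (2 * β * N * M ^ 2 * ((N : ℝ) - 1) *
              Real.exp (-β * (Δ - 2 * r * M))) ^ n * ‖ξ - xstar‖ := by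
  set L := 2 * β * N * M ^ 2 * ((N : ℝ) - 1) * Real.exp (-β * (Δ - 2 * r * M))
  have hN' : (2 : ℝ) ≤ N := by exact_mod_cast hN
  have hc : 0 ≤ β * M ^ 2 * ((N : ℝ) - 1) * Real.exp (-β * (Δ - 2 * r * M)) :=
    mul_nonneg (mul_nonneg (by positivity) (by linarith)) (Real.exp_pos _).le
  have hL0 : 0 ≤ L := by nlinarith
  have hlip : LipschitzOnWith L.toNNReal (hopfieldUpdate x β) (closedBall (x i) r) :=
    LipschitzOnWith.of_dist_le_mul fun ξ hξ η hη => by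
      refine (dist_hopfieldUpdate_le hβ.le (fun k => hM.2 ⟨k, rfl⟩)
        (fun j hj => hΔ.2 ⟨j, hj, rfl⟩) hξ hη).trans ?_
      rw [Real.coe_toNNReal _ hL0]
      gcongr
      nlinarith
  obtain ⟨xstar, hxstar, hfix, huniq, hiter⟩ :=
    hlip.exists_unique_fixedPoint_dist_iterate_le (Real.toNNReal_lt_one.2 hL)
      isClosed_closedBall.isComplete ⟨x i, mem_closedBall_self hr.le⟩ hmaps
  refine ⟨xstar, hxstar, hfix, huniq, fun ξ hξ n => ?_⟩
  simpa only [dist_eq_norm, NNReal.coe_pow, Real.coe_toNNReal _ hL0] using hiter ξ hξ n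

/-- For N ≥ 2, M > 0, index i and r > 0, if (a) f maps the closed ball B of
radius r centered at x_i into itself and (b) L = 2 β N M² (N − 1) exp(−β (Δ_i − 2 r M)) < 1,
then f has a unique fixed point x_i* in B and for every ξ ∈ B the iterates converge to it
geometrically: ‖f⁽ⁿ⁾(ξ) − x_i*‖ ≤ Lⁿ ‖ξ − x_i*‖ for all n. -/
theorem contraction_unique_fixedPoint_geometric
    {d N : ℕ} (hN : 2 ≤ N) (x : Fin N → EuclideanSpace ℝ (Fin d)) (β M Δ : ℝ)
    (hβ : 0 < β) (hMpos : 0 < M)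
    (hM : IsGreatest (Set.range fun i => ‖x i‖) M)
    (i : Fin N)
    (hΔ : IsLeast {v : ℝ | ∃ j, j ≠ i ∧ v = ⟪x i, x i⟫ - ⟪x i, x j⟫} Δ)
    (r : ℝ) (hr : 0 < r)
    (hmaps : Set.MapsTo (hopfieldUpdate x β)
      (Metric.closedBall (x i) r) (Metric.closedBall (x i) r))
    (hL : 2 * β * N * M ^ 2 * ((N : ℝ) - 1) * Real.exp (-β * (Δ - 2 * r * M)) < 1) :
    ∃ xstar ∈ Metric.closedBall (x i) r,
      hopfieldUpdate x β xstar = xstar ∧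
      (∀ y ∈ Metric.closedBall (x i) r, hopfieldUpdate x β y = y → y = xstar) ∧
      ∀ ξ ∈ Metric.closedBall (x i) r, ∀ n : ℕ,
        ‖(hopfieldUpdate x β)^[n] ξ - xstar‖
          ≤ (2 * β * N * M ^ 2 * ((N : ℝ) - 1) *
              Real.exp (-β * (Δ - 2 * r * M))) ^ n * ‖ξ - xstar‖ :=
  contraction_unique_fixedPoint_geometric_general hN x β M Δ hβ hM i hΔ r hr hmaps hL
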